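/- Let β < 2 and define h(ξ) = ξ·√(1 − βξ² + ξ⁴) for ξ ≥ 0 (note 1 − βξ² + ξ⁴ > 0 for all ξ when β < 2). Then for every ξ > 0, h''(ξ) = ξ·(6ξ⁶ − 9βξ⁴ + (2β²+10)ξ² − 3β)/(1 − βξ² + ξ⁴)^{3/2}. Moreover the cubic s ↦ 6s³ − 9βs² + (2β²+10)s − 3β is strictly increasing on [0,∞), and consequently: if β ≤ 0 then h''(ξ) > 0 for all ξ > 0 (with h''(ξ) vanishing only in the limit ξ → 0), while if 0 < β < 2 then there is a unique ξ₀ > 0 with h''(ξ₀) = 0, and h'' < 0 on (0, ξ₀) and h'' > 0 on (ξ₀, ∞). -/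

import Mathlib

lemma aux_Ppos (β : ℝ) (hβ : β < 2) (y : ℝ) : 0 < 1 - β * y ^ 2 + y ^ 4 := by
  nlinarith [sq_nonneg (1 - y^2), mul_nonneg (by linarith : (0:ℝ) ≤ 2 - β) (sq_nonneg y)]

lemma aux_dP (β : ℝ) (y : ℝ) :
    HasDerivAt (fun y : ℝ => 1 - β * y ^ 2 + y ^ 4) (4 * y ^ 3 - 2 * β * y) y := by
  have h2 : HasDerivAt (fun y : ℝ => y ^ 2) (2 * y) y := by simpa using hasDerivAt_pow 2 y
  have h4 : HasDerivAt (fun y : ℝ => y ^ 4) (4 * y ^ 3) y := by simpa using hasDerivAt_pow 4 y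
  have := ((h2.const_mul β).const_sub 1).add h4
  exact this.congr_deriv (by ring)

lemma aux_dsqrt (β : ℝ) (hβ : β < 2) (y : ℝ) :
    HasDerivAt (fun y : ℝ => Real.sqrt (1 - β * y ^ 2 + y ^ 4))
      ((4 * y ^ 3 - 2 * β * y) / (2 * Real.sqrt (1 - β * y ^ 2 + y ^ 4))) y := by
  have hP := aux_Ppos β hβ y
  have := (Real.hasDerivAt_sqrt hP.ne').comp y (aux_dP β y)
  exact this.congr_deriv (by field_simp)

lemma aux_d1 (β : ℝ) (hβ : β < 2) (y : ℝ) :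
    HasDerivAt (fun y : ℝ => y * Real.sqrt (1 - β * y ^ 2 + y ^ 4))
      (Real.sqrt (1 - β * y ^ 2 + y ^ 4)
        + y * (4 * y ^ 3 - 2 * β * y) / (2 * Real.sqrt (1 - β * y ^ 2 + y ^ 4))) y := by
  have := (hasDerivAt_id y).mul (aux_dsqrt β hβ y)
  exact this.congr_deriv (by simp only [id_eq]; ring)

lemma aux_formula (β : ℝ) (hβ : β < 2) (ξ : ℝ) :
    iteratedDeriv 2 (fun y : ℝ => y * Real.sqrt (1 - β * y ^ 2 + y ^ 4)) ξ
      = ξ * (6 * ξ ^ 6 - 9 * β * ξ ^ 4 + (2 * β ^ 2 + 10) * ξ ^ 2 - 3 * β)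
        / (1 - β * ξ ^ 2 + ξ ^ 4) ^ ((3 : ℝ) / 2) := by
  have hP := aux_Ppos β hβ ξ
  have hs0 : 0 < Real.sqrt (1 - β * ξ ^ 2 + ξ ^ 4) := Real.sqrt_pos.2 hP
  rw [iteratedDeriv_succ, iteratedDeriv_one]
  have hg : deriv (fun y : ℝ => y * Real.sqrt (1 - β * y ^ 2 + y ^ 4))
      = fun y : ℝ => Real.sqrt (1 - β * y ^ 2 + y ^ 4)
        + y * (4 * y ^ 3 - 2 * β * y) / (2 * Real.sqrt (1 - β * y ^ 2 + y ^ 4)) :=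
    funext fun y => (aux_d1 β hβ y).deriv
  rw [hg]
  -- derivative of g
  have hu : HasDerivAt (fun y : ℝ => y * (4 * y ^ 3 - 2 * β * y)) (16 * ξ ^ 3 - 4 * β * ξ) ξ := by
    have hinner : HasDerivAt (fun y : ℝ => 4 * y ^ 3 - 2 * β * y) (12 * ξ ^ 2 - 2 * β) ξ := by
      have h3 : HasDerivAt (fun y : ℝ => y ^ 3) (3 * ξ ^ 2) ξ := by simpa using hasDerivAt_pow 3 ξ
      have := (h3.const_mul 4).sub ((hasDerivAt_id ξ).const_mul (2 * β))
      exact this.congr_deriv (by ring)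
    have := (hasDerivAt_id ξ).mul hinner
    exact this.congr_deriv (by simp only [id_eq]; ring)
  have hv : HasDerivAt (fun y : ℝ => 2 * Real.sqrt (1 - β * y ^ 2 + y ^ 4))
      (2 * ((4 * ξ ^ 3 - 2 * β * ξ) / (2 * Real.sqrt (1 - β * ξ ^ 2 + ξ ^ 4)))) ξ :=
    (aux_dsqrt β hβ ξ).const_mul 2
  have hq := hu.div hv (by positivity)
  have hD := ((aux_dsqrt β hβ ξ).add hq).deriv
  erw [hD]
  -- algebra
  set s := Real.sqrt (1 - β * ξ ^ 2 + ξ ^ 4) with hsdef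
  have hs2 : s ^ 2 = 1 - β * ξ ^ 2 + ξ ^ 4 := Real.sq_sqrt hP.le
  have h32 : (1 - β * ξ ^ 2 + ξ ^ 4) ^ ((3 : ℝ) / 2) = s ^ 3 := by
    have h1 : (1 - β * ξ ^ 2 + ξ ^ 4) ^ ((3 : ℝ) / 2)
        = ((1 - β * ξ ^ 2 + ξ ^ 4) ^ ((1 : ℝ) / 2)) ^ (3 : ℕ) := by
      rw [← Real.rpow_natCast _ 3, ← Real.rpow_mul hP.le]
      norm_num
    rw [h1, ← Real.sqrt_eq_rpow]
  rw [h32]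
  field_simp
  linear_combination (40 * ξ ^ 3 - 12 * β * ξ) * hs2

lemma aux_mono (β : ℝ) (hβ : β < 2) :
    StrictMonoOn (fun s : ℝ => 6 * s ^ 3 - 9 * β * s ^ 2 + (2 * β ^ 2 + 10) * s - 3 * β)
      (Set.Ici 0) := by
  intro a ha b hb hab
  simp only [Set.mem_Ici] at ha hb
  have key : 0 < 6 * (a ^ 2 + a * b + b ^ 2) - 9 * β * (a + b) + (2 * β ^ 2 + 10) := by
    rcases le_or_gt β 0 with h | h
    · nlinarith [mul_nonneg ha hb, sq_nonneg a, sq_nonneg b, sq_nonneg β,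
        mul_nonneg (by linarith : (0:ℝ) ≤ -(9 * β)) (add_nonneg ha hb)]
    · have hb2 : β ^ 2 < 4 := by nlinarith
      nlinarith [sq_nonneg (a - b), sq_nonneg (3 * a + 3 * b - 3 * β)]
  simp only
  nlinarith [mul_pos (sub_pos.2 hab) key]

lemma aux_cp (β : ℝ) (hβ : β < 2) (ξ : ℝ) (hξ : 0 < ξ)
    (hc : 0 < 6 * ξ ^ 6 - 9 * β * ξ ^ 4 + (2 * β ^ 2 + 10) * ξ ^ 2 - 3 * β) :
    0 < iteratedDeriv 2 (fun y : ℝ => y * Real.sqrt (1 - β * y ^ 2 + y ^ 4)) ξ := by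
  rw [aux_formula β hβ ξ]
  exact div_pos (mul_pos hξ hc) (Real.rpow_pos_of_pos (aux_Ppos β hβ ξ) _)

lemma aux_cn (β : ℝ) (hβ : β < 2) (ξ : ℝ) (hξ : 0 < ξ)
    (hc : 6 * ξ ^ 6 - 9 * β * ξ ^ 4 + (2 * β ^ 2 + 10) * ξ ^ 2 - 3 * β < 0) :
    iteratedDeriv 2 (fun y : ℝ => y * Real.sqrt (1 - β * y ^ 2 + y ^ 4)) ξ < 0 := by
  rw [aux_formula β hβ ξ]
  exact div_neg_of_neg_of_pos (mul_neg_of_pos_of_neg hξ hc)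
    (Real.rpow_pos_of_pos (aux_Ppos β hβ ξ) _)



open MeasureTheory

/-- Structure of the second derivative of the dispersion relation
`h(ξ) = ξ√(1 − βξ² + ξ⁴)` of the linearized sixth-order Boussinesq system, `β < 2`. -/
theorem dispersion_second_derivative (β : ℝ) (hβ : β < 2) :
    (∀ ξ : ℝ, 0 < 1 - β * ξ ^ 2 + ξ ^ 4) ∧
    (∀ ξ : ℝ, 0 < ξ →
      iteratedDeriv 2 (fun y : ℝ => y * Real.sqrt (1 - β * y ^ 2 + y ^ 4)) ξ
        = ξ * (6 * ξ ^ 6 - 9 * β * ξ ^ 4 + (2 * β ^ 2 + 10) * ξ ^ 2 - 3 * β)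
          / (1 - β * ξ ^ 2 + ξ ^ 4) ^ ((3 : ℝ) / 2)) ∧
    StrictMonoOn (fun s : ℝ => 6 * s ^ 3 - 9 * β * s ^ 2 + (2 * β ^ 2 + 10) * s - 3 * β)
      (Set.Ici 0) ∧
    (β ≤ 0 → ∀ ξ : ℝ, 0 < ξ →
      0 < iteratedDeriv 2 (fun y : ℝ => y * Real.sqrt (1 - β * y ^ 2 + y ^ 4)) ξ) ∧
    (0 < β → ∃ ξ0 : ℝ, 0 < ξ0 ∧
      iteratedDeriv 2 (fun y : ℝ => y * Real.sqrt (1 - β * y ^ 2 + y ^ 4)) ξ0 = 0 ∧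
      (∀ ξ ∈ Set.Ioo 0 ξ0,
        iteratedDeriv 2 (fun y : ℝ => y * Real.sqrt (1 - β * y ^ 2 + y ^ 4)) ξ < 0) ∧
      (∀ ξ ∈ Set.Ioi ξ0,
        0 < iteratedDeriv 2 (fun y : ℝ => y * Real.sqrt (1 - β * y ^ 2 + y ^ 4)) ξ) ∧
      (∀ ξ : ℝ, 0 < ξ →
        iteratedDeriv 2 (fun y : ℝ => y * Real.sqrt (1 - β * y ^ 2 + y ^ 4)) ξ = 0 →
        ξ = ξ0)) := by
  refine ⟨aux_Ppos β hβ, fun ξ _ => aux_formula β hβ ξ, aux_mono β hβ, ?_, ?_⟩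
  · intro hβ0 ξ hξ
    apply aux_cp β hβ ξ hξ
    nlinarith [pow_pos hξ 6, pow_pos hξ 2, sq_nonneg β,
      mul_nonneg (by linarith : (0:ℝ) ≤ -(9 * β)) (pow_nonneg hξ.le 4)]
  · intro hβ0
    set c : ℝ → ℝ := fun s => 6 * s ^ 3 - 9 * β * s ^ 2 + (2 * β ^ 2 + 10) * s - 3 * β with hc
    have hcont : ContinuousOn c (Set.Icc 0 β) := (by fun_prop : Continuous c).continuousOn
    have hc0 : c 0 < 0 := by simp [hc]; linarith
    have hcβ : 0 < c β := by simp only [hc]; nlinarith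
    have hmem : (0 : ℝ) ∈ Set.Ioo (c 0) (c β) := ⟨hc0, hcβ⟩
    obtain ⟨s0, hs0mem, hcs0⟩ := intermediate_value_Ioo (le_of_lt hβ0) hcont hmem
    have hs0pos : 0 < s0 := hs0mem.1
    have hneg : ∀ ξ ∈ Set.Ioo 0 (Real.sqrt s0),
        iteratedDeriv 2 (fun y : ℝ => y * Real.sqrt (1 - β * y ^ 2 + y ^ 4)) ξ < 0 := by
      intro ξ hξ
      apply aux_cn β hβ ξ hξ.1
      have hlt : ξ ^ 2 < s0 := by
        have := Real.sq_sqrt hs0pos.le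
        nlinarith [hξ.2, hξ.1, Real.sqrt_pos.2 hs0pos]
      have := aux_mono β hβ (Set.mem_Ici.2 (sq_nonneg ξ)) (Set.mem_Ici.2 hs0pos.le) hlt
      simp only [hc] at this hcs0
      nlinarith [this, hcs0]
    have hpos : ∀ ξ ∈ Set.Ioi (Real.sqrt s0),
        0 < iteratedDeriv 2 (fun y : ℝ => y * Real.sqrt (1 - β * y ^ 2 + y ^ 4)) ξ := by
      intro ξ hξ
      have hξ0 : 0 < ξ := lt_trans (Real.sqrt_pos.2 hs0pos) hξ
      apply aux_cp β hβ ξ hξ0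
      have hlt : s0 < ξ ^ 2 := by
        have := Real.sq_sqrt hs0pos.le
        nlinarith [Set.mem_Ioi.1 hξ, Real.sqrt_pos.2 hs0pos]
      have := aux_mono β hβ (Set.mem_Ici.2 hs0pos.le) (Set.mem_Ici.2 (sq_nonneg ξ)) hlt
      simp only [hc] at this hcs0
      nlinarith [this, hcs0]
    refine ⟨Real.sqrt s0, Real.sqrt_pos.2 hs0pos, ?_, hneg, hpos, ?_⟩
    · rw [aux_formula β hβ]
      have : Real.sqrt s0 ^ 2 = s0 := Real.sq_sqrt hs0pos.le
      have h4 : Real.sqrt s0 ^ 4 = s0 ^ 2 := by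
        rw [show 4 = 2 * 2 from rfl, pow_mul, this]
      have h6 : Real.sqrt s0 ^ 6 = s0 ^ 3 := by
        rw [show 6 = 2 * 3 from rfl, pow_mul, this]
      have h0 : 6 * Real.sqrt s0 ^ 6 - 9 * β * Real.sqrt s0 ^ 4
          + (2 * β ^ 2 + 10) * Real.sqrt s0 ^ 2 - 3 * β = 0 := by
        rw [h4, h6, this]
        simpa [hc] using hcs0
      rw [show Real.sqrt s0 * (6 * Real.sqrt s0 ^ 6 - 9 * β * Real.sqrt s0 ^ 4
          + (2 * β ^ 2 + 10) * Real.sqrt s0 ^ 2 - 3 * β) = Real.sqrt s0 * 0 from by rw [h0]]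
      simp
    · intro ξ hξ hz
      rcases lt_trichotomy ξ (Real.sqrt s0) with h | h | h
      · exact absurd hz (ne_of_lt (hneg ξ ⟨hξ, h⟩))
      · exact h
      · exact absurd hz (ne_of_gt (hpos ξ h))
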